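/- arXiv:1405.0976 — 3 statements merged into one kernel-verified Lean document; each statement's English description precedes it below -/
import Mathlib

section
/- Let G and H be finite groups. There exist subgroups L ≤ G×H and M ≤ H×G with L*M = Δ(G) if and only if there exist subgroups K ⊴ P ≤ H such that P/K is isomorphic to G (i.e., G is isomorphic to a subquotient of H). -/
/-- The star (Bouc) product of subgroups of direct products:
`L*M := {(g,k) | ∃ h, (g,h) ∈ L ∧ (h,k) ∈ M}`. -/
def starProd {G H K : Type*} [Group G] [Group H] [Group K]
    (L : Subgroup (G × H)) (M : Subgroup (H × K)) : Subgroup (G × K) where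
  carrier := {p | ∃ h : H, (p.1, h) ∈ L ∧ (h, p.2) ∈ M}
  one_mem' := ⟨1, L.one_mem, M.one_mem⟩
  mul_mem' := by
    rintro a b ⟨h1, h1L, h1M⟩ ⟨h2, h2L, h2M⟩
    exact ⟨h1 * h2, L.mul_mem h1L h2L, M.mul_mem h1M h2M⟩
  inv_mem' := by
    rintro a ⟨h, hL, hM⟩
    exact ⟨h⁻¹, L.inv_mem hL, M.inv_mem hM⟩

/-- `Δ(G) = {(g, g) | g ∈ G}`. -/
def deltaSub (G : Type*) [Group G] : Subgroup (G × G) where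
  carrier := {p | p.1 = p.2}
  one_mem' := rfl
  mul_mem' := by
    rintro a b (ha : a.1 = a.2) (hb : b.1 = b.2)
    show a.1 * b.1 = a.2 * b.2
    rw [ha, hb]
  inv_mem' := by
    rintro a (ha : a.1 = a.2)
    show a.1⁻¹ = a.2⁻¹
    rw [ha]

/-! `L * M = Δ(G)` holds exactly when `L` and `M` are, up to the swap of factors, the graph of
a single surjection `π : N → G` from a group `N` embedded in `H` by some `ι`. Given such `ι` and
`π`, `G ≅ ι(N) / ker (π ∘ ι⁻¹)` is a subquotient of `H`. Conversely, from `L * M = Δ(G)` take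
`N = {(g, h) | (g, h) ∈ L, (h, g) ∈ M}`: the second projection of `N` is injective because
`L * M ⊆ Δ(G)`, and the first is surjective because `Δ(G) ⊆ L * M`. -/

section

variable {G H : Type*} [Group G] [Group H]

lemma mem_starProd {K : Type*} [Group K] {L : Subgroup (G × H)} {M : Subgroup (H × K)}
    {p : G × K} : p ∈ starProd L M ↔ ∃ h : H, (p.1, h) ∈ L ∧ (h, p.2) ∈ M :=
  Iff.rfl

lemma mem_deltaSub {p : G × G} : p ∈ deltaSub G ↔ p.1 = p.2 :=
  Iff.rfl

lemma exists_subquotient_mulEquiv_of_injective_of_surjective {N : Type*} [Group N]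
    {ι : N →* H} (hι : Function.Injective ι) {π : N →* G} (hπ : Function.Surjective π) :
    ∃ (P : Subgroup H) (K : Subgroup P) (_ : K.Normal), Nonempty (G ≃* (P ⧸ K)) := by
  let φ : ι.range →* G := π.comp (MonoidHom.ofInjective hι).symm.toMonoidHom
  have hφ : Function.Surjective φ := hπ.comp (MonoidHom.ofInjective hι).symm.surjective
  exact ⟨ι.range, φ.ker, inferInstance, ⟨(QuotientGroup.quotientKerEquivOfSurjective φ hφ).symm⟩⟩

lemma starProd_range_prod_eq_deltaSub {N : Type*} [Group N]
    {ι : N →* H} (hι : Function.Injective ι) {π : N →* G} (hπ : Function.Surjective π) :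
    starProd (π.prod ι).range (ι.prod π).range = deltaSub G := by
  ext ⟨g₁, g₂⟩
  simp only [mem_starProd, mem_deltaSub, MonoidHom.mem_range, MonoidHom.prod_apply, Prod.mk.injEq]
  constructor
  · rintro ⟨h, ⟨n₁, rfl, rfl⟩, ⟨n₂, hn, rfl⟩⟩
    rw [hι hn]
  · rintro rfl
    obtain ⟨n, rfl⟩ := hπ g₁
    exact ⟨ι n, ⟨n, rfl, rfl⟩, ⟨n, rfl, rfl⟩⟩

section loopSubgroup

variable (L : Subgroup (G × H)) (M : Subgroup (H × G))

def loopSubgroup : Subgroup (G × H) :=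
  L ⊓ M.comap (MulEquiv.prodComm : G × H ≃* H × G).toMonoidHom

variable {L M}

lemma injective_snd_loopSubgroup (hLM : starProd L M ≤ deltaSub G) :
    Function.Injective ((MonoidHom.snd G H).comp (loopSubgroup L M).subtype) := by
  rintro ⟨x, hxL, -⟩ ⟨y, -, hyM⟩ (hxy : x.2 = y.2)
  have hfst : x.1 = y.1 := hLM (x := (x.1, y.1)) ⟨x.2, hxL, by rw [hxy]; exact hyM⟩
  exact Subtype.ext (Prod.ext hfst hxy)

lemma surjective_fst_loopSubgroup (hLM : deltaSub G ≤ starProd L M) :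
    Function.Surjective ((MonoidHom.fst G H).comp (loopSubgroup L M).subtype) := by
  intro g
  obtain ⟨h, hL, hM⟩ := hLM (show (g, g) ∈ deltaSub G from rfl)
  exact ⟨⟨(g, h), hL, hM⟩, rfl⟩

end loopSubgroup

end

theorem statement1_general (G H : Type*) [Group G] [Group H] :
    (∃ (L : Subgroup (G × H)) (M : Subgroup (H × G)), starProd L M = deltaSub G) ↔
      ∃ (P : Subgroup H) (K : Subgroup P) (_ : K.Normal), Nonempty (G ≃* (P ⧸ K)) := by
  constructor
  · rintro ⟨L, M, hLM⟩
    exact exists_subquotient_mulEquiv_of_injective_of_surjective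
      (injective_snd_loopSubgroup hLM.le) (surjective_fst_loopSubgroup hLM.ge)
  · rintro ⟨P, K, _, ⟨θ⟩⟩
    exact ⟨_, _, starProd_range_prod_eq_deltaSub P.subtype_injective
      (π := θ.symm.toMonoidHom.comp (QuotientGroup.mk' K))
      (θ.symm.surjective.comp (QuotientGroup.mk'_surjective K))⟩

/-- There exist subgroups `L ≤ G×H` and `M ≤ H×G` with `L*M = Δ(G)` iff there exist
subgroups `K ⊴ P ≤ H` such that `P/K ≅ G`, i.e. iff `G` is isomorphic to a
subquotient of `H`. -/
theorem statement1 (G H : Type*) [Group G] [Group H] [Finite G] [Finite H] :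
    (∃ (L : Subgroup (G × H)) (M : Subgroup (H × G)), starProd L M = deltaSub G) ↔
      ∃ (P : Subgroup H) (K : Subgroup P) (_ : K.Normal), Nonempty (G ≃* (P ⧸ K)) :=
  statement1_general G H
end

section
/- Let G and H be finite groups, let K ⊴ P ≤ G be subgroups, let η : H → P/K be a group isomorphism, and let L := {(g,h) ∈ G×H | g ∈ P and gK = η(h)} ≤ G×H. Let V be an irreducible complex representation of Aut(G) on which every inner automorphism of G acts as the identity, and let W be an irreducible complex representation of Aut(H), with characters χ_V and χ_W. If Σ_{(α,β) ∈ stab(L)} χ_V(α)·χ_W(β⁻¹) ≠ 0, then every inner automorphism of H acts as the identity on W. -/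
open CategoryTheory

/-- The subgroup `L = {(g,h) ∈ G×H | g ∈ P ∧ gK = η(h)}` of `G × H` attached to
a section `K ⊴ P ≤ G` and an isomorphism `η : H ≃ P/K`. -/
def goursat {G H : Type*} [Group G] [Group H] (P : Subgroup G) (K : Subgroup P)
    [K.Normal] (η : H ≃* P ⧸ K) : Subgroup (G × H) where
  carrier := {p | ∃ hp : p.1 ∈ P, (QuotientGroup.mk (⟨p.1, hp⟩ : P) : P ⧸ K) = η p.2}
  one_mem' := by
    refine ⟨P.one_mem, ?_⟩
    show (QuotientGroup.mk (1 : P) : P ⧸ K) = η 1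
    simp
  mul_mem' := by
    rintro a b ⟨ha, hqa⟩ ⟨hb, hqb⟩
    refine ⟨P.mul_mem ha hb, ?_⟩
    show (QuotientGroup.mk ((⟨a.1, ha⟩ : P) * (⟨b.1, hb⟩ : P)) : P ⧸ K) = η (a.2 * b.2)
    rw [QuotientGroup.mk_mul, hqa, hqb, map_mul]
  inv_mem' := by
    rintro a ⟨ha, hqa⟩
    refine ⟨P.inv_mem ha, ?_⟩
    show (QuotientGroup.mk ((⟨a.1, ha⟩ : P)⁻¹) : P ⧸ K) = η a.2⁻¹
    rw [QuotientGroup.mk_inv, hqa, map_inv]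

/-- The stabilizer of `L ≤ G×H` under the action of `Aut(G) × Aut(H)` on subgroups
of `G × H` given by applying `α × β`. -/
def stabSet {G H : Type*} [Group G] [Group H] (L : Subgroup (G × H)) :
    Set (MulAut G × MulAut H) :=
  {ab | Subgroup.map (MulEquiv.prodCongr ab.1 ab.2).toMonoidHom L = L}

/-! The sum `σ` of `W.ρ n` over the inner automorphisms `n` of `H` commutes with `Aut(H)`, because
`Inn(H)` is normal, so by Schur's lemma it is a scalar `c`. If `c ≠ 0`, then `W.ρ n * σ = σ` forces
`W.ρ n = 1`. If `c = 0`, note that `conj h` lifts to `(conj g, conj h) ∈ stab(L)` for any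
`(g, h) ∈ L`, and `conj g` acts trivially on `V`. Translating the sum by these lifts and averaging
over `Inn(H)` rewrites it as a combination of the traces `tr (W.ρ β⁻¹ * σ) = 0`, so it vanishes. -/

open scoped Pointwise

namespace MulAut

variable {G H : Type*} [Group G] [Group H]

def prodCongrHom : MulAut G × MulAut H →* MulAut (G × H) where
  toFun ab := MulEquiv.prodCongr ab.1 ab.2
  map_one' := rfl
  map_mul' _ _ := rfl

theorem prodCongrHom_conj (g : G) (h : H) : prodCongrHom (conj g, conj h) = conj (g, h) := rfl

instance normal_range_conj : (conj : G →* MulAut G).range.Normal where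
  conj_mem := by
    rintro _ ⟨g, rfl⟩ γ
    refine ⟨γ g, ?_⟩
    ext x
    simp [conj_apply]

end MulAut

section Stabilizer

variable {G H : Type*} [Group G] [Group H]

def stabSubgroup (L : Subgroup (G × H)) : Subgroup (MulAut G × MulAut H) :=
  (MulAction.stabilizer (MulAut (G × H)) L).comap MulAut.prodCongrHom

theorem coe_stabSubgroup (L : Subgroup (G × H)) : (stabSubgroup L : Set _) = stabSet L := rfl

theorem conj_mem_stabSubgroup {L : Subgroup (G × H)} {l : G × H} (hl : l ∈ L) :
    (MulAut.conj l.1, MulAut.conj l.2) ∈ stabSubgroup L := by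
  show MulAut.prodCongrHom (MulAut.conj l.1, MulAut.conj l.2) • L = L
  rw [MulAut.prodCongrHom_conj]
  exact Subgroup.conj_smul_eq_self_of_mem hl

theorem exists_mem_goursat (P : Subgroup G) (K : Subgroup P) [K.Normal] (η : H ≃* P ⧸ K) (h : H) :
    ∃ g : G, (g, h) ∈ goursat P K η := by
  obtain ⟨p, hp⟩ := QuotientGroup.mk_surjective (η h)
  exact ⟨p, p.2, hp⟩

end Stabilizer

namespace FDRep

variable {k Γ : Type*} [Field k] [Group Γ] (W : FDRep k Γ) (N : Subgroup Γ) [Fintype N]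

noncomputable def sumOver : W →ₗ[k] W := ∑ n : N, W.ρ n

theorem ρ_mul_sumOver {n : Γ} (hn : n ∈ N) : W.ρ n * W.sumOver N = W.sumOver N := by
  rw [sumOver, Finset.mul_sum]
  exact Fintype.sum_equiv (Equiv.mulLeft (⟨n, hn⟩ : N)) _ _ fun m => (map_mul W.ρ n m).symm

theorem commute_ρ_sumOver [N.Normal] (γ : Γ) : Commute (W.ρ γ) (W.sumOver N) := by
  rw [Commute, SemiconjBy, sumOver, Finset.mul_sum, Finset.sum_mul]
  refine Fintype.sum_equiv (MulAut.conjNormal γ).toEquiv _ _ fun n => ?_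
  simp only [MulEquiv.toEquiv_eq_coe, MulEquiv.coe_toEquiv, MulAut.conjNormal_apply, ← map_mul,
    inv_mul_cancel_right]

noncomputable def sumOverHom [N.Normal] : W ⟶ W where
  hom := FGModuleCat.ofHom (W.sumOver N)
  comm γ := by
    ext x
    exact LinearMap.congr_fun (W.commute_ρ_sumOver N γ).eq.symm x

theorem sumOver_eq_zero_or_ρ_eq_one [N.Normal] [IsAlgClosed k] [Simple W] :
    W.sumOver N = 0 ∨ ∀ n ∈ N, W.ρ n = 1 := by
  obtain ⟨c, hc⟩ := endomorphism_simple_eq_smul_id k (W.sumOverHom N)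
  have hσ : W.sumOver N = c • 1 := (congrArg (fun f : W ⟶ W => f.hom.hom.hom) hc).symm
  rcases eq_or_ne c 0 with rfl | hc0
  · exact .inl (by rw [hσ, zero_smul])
  · refine .inr fun n hn => smul_right_injective _ hc0 ?_
    simpa [hσ] using W.ρ_mul_sumOver N hn

theorem sum_character_mul_eq_zero (hσ : W.sumOver N = 0) (γ : Γ) :
    ∑ n : N, W.character (γ * n) = 0 := by
  simp only [FDRep.character, map_mul, ← map_sum, ← Finset.mul_sum]
  rw [← sumOver, hσ, mul_zero, map_zero]

end FDRep

section

variable {k Γ₁ Γ₂ : Type*} [Field k] [Group Γ₁] [Group Γ₂]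
  (V : FDRep k Γ₁) (W : FDRep k Γ₂) (S : Subgroup (Γ₁ × Γ₂)) [Fintype S]

theorem sum_character_eq_sum_character_mul {t : Γ₁ × Γ₂} (ht : t ∈ S) (hV : V.ρ t.1 = 1) :
    ∑ s : S, V.character s.1.1 * W.character s.1.2⁻¹
      = ∑ s : S, V.character s.1.1 * W.character (s.1.2⁻¹ * t.2⁻¹) := by
  refine (Fintype.sum_equiv (Equiv.mulLeft (⟨t, ht⟩ : S)) _ _ fun s => ?_).symm
  simp [FDRep.character, hV]

theorem ρ_eq_one_of_sum_character_ne_zero [IsAlgClosed k] [CharZero k] [Simple W]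
    (N : Subgroup Γ₂) [N.Normal] [Fintype N]
    (hlift : ∀ n ∈ N, ∃ t ∈ S, t.2 = n ∧ V.ρ t.1 = 1)
    (hsum : ∑ s : S, V.character s.1.1 * W.character s.1.2⁻¹ ≠ 0) :
    ∀ n ∈ N, W.ρ n = 1 := by
  refine (W.sumOver_eq_zero_or_ρ_eq_one N).resolve_left fun hσ => hsum ?_
  set χ := ∑ s : S, V.character s.1.1 * W.character s.1.2⁻¹
  have htranslate (n : N) : χ = ∑ s : S, V.character s.1.1 * W.character (s.1.2⁻¹ * n) := by
    obtain ⟨t, ht, ht₂, htV⟩ := hlift _ (inv_mem n.2)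
    exact (sum_character_eq_sum_character_mul V W S ht htV).trans (by rw [ht₂, inv_inv])
  have hcard : (Fintype.card N : k) * χ = 0 := calc
    _ = ∑ n : N, ∑ s : S, V.character s.1.1 * W.character (s.1.2⁻¹ * n) := by
      rw [← Finset.sum_congr rfl fun n _ => htranslate n, Finset.sum_const, Finset.card_univ,
        nsmul_eq_mul]
    _ = ∑ s : S, V.character s.1.1 * ∑ n : N, W.character (s.1.2⁻¹ * n) := by
      rw [Finset.sum_comm]
      simp only [Finset.mul_sum]
    _ = 0 := by simp only [W.sum_character_mul_eq_zero N hσ, mul_zero, Finset.sum_const_zero]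
  exact (mul_eq_zero.mp hcard).resolve_left (Nat.cast_ne_zero.mpr Fintype.card_ne_zero)

end

theorem statement4_general (G H : Type) [Group G] [Group H] [Finite G] [Finite H]
    (P : Subgroup G) (K : Subgroup P) [K.Normal] (η : H ≃* P ⧸ K)
    (V : FDRep ℂ (MulAut G)) (W : FDRep ℂ (MulAut H)) [Simple W]
    (hV : ∀ α ∈ (MulAut.conj : G →* MulAut G).range, V.ρ α = 1)
    (hsum : (∑ᶠ ab ∈ stabSet (goursat P K η),
        V.character ab.1 * W.character ab.2⁻¹) ≠ 0) :
    ∀ β ∈ (MulAut.conj : H →* MulAut H).range, W.ρ β = 1 := by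
  classical
  let L := goursat P K η
  have : Fintype (stabSubgroup L) := Fintype.ofFinite _
  have : Fintype (MulAut.conj : H →* MulAut H).range := Fintype.ofFinite _
  refine ρ_eq_one_of_sum_character_ne_zero V W (stabSubgroup L) _ ?_ ?_
  · rintro _ ⟨h, rfl⟩
    obtain ⟨g, hg⟩ := exists_mem_goursat P K η h
    exact ⟨_, conj_mem_stabSubgroup hg, rfl, hV _ ⟨g, rfl⟩⟩
  · rw [← coe_stabSubgroup, ← finsum_set_coe_eq_finsum_mem] at hsum
    rwa [← finsum_eq_sum_of_fintype]

/-- Let `L = {(g,h) | g ∈ P, gK = η(h)}` for a section `K ⊴ P ≤ G` and an isomorphism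
`η : H ≃ P/K`. If `V` is an irreducible complex representation of `Aut(G)` on which
every inner automorphism of `G` acts as the identity, `W` is an irreducible complex
representation of `Aut(H)`, and `Σ_{(α,β) ∈ stab(L)} χ_V(α)·χ_W(β⁻¹) ≠ 0`, then every
inner automorphism of `H` acts as the identity on `W`. -/
theorem statement4 (G H : Type) [Group G] [Group H] [Finite G] [Finite H]
    (P : Subgroup G) (K : Subgroup P) [K.Normal] (η : H ≃* P ⧸ K)
    (V : FDRep ℂ (MulAut G)) (W : FDRep ℂ (MulAut H)) [Simple V] [Simple W]
    (hV : ∀ α ∈ (MulAut.conj : G →* MulAut G).range, V.ρ α = 1)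
    (hsum : (∑ᶠ ab ∈ stabSet (goursat P K η),
        V.character ab.1 * W.character ab.2⁻¹) ≠ 0) :
    ∀ β ∈ (MulAut.conj : H →* MulAut H).range, W.ρ β = 1 :=
  statement4_general G H P K η V W hV hsum
end

section
/- Let K, G, H be finite groups and let U ≤ K×G, L ≤ G×H be subgroups. Then the group q(U*L) = p₁(U*L)/k₁(U*L) is isomorphic to a subquotient of q(L) = p₁(L)/k₁(L), and also to a subquotient of q(U) = p₁(U)/k₁(U); that is, there exist subgroups B ⊴ A ≤ q(L) with A/B ≅ q(U*L), and similarly for q(U). -/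
/-- `p₁(L)`, the image of `L ≤ G×H` under the first projection. -/
def proj1 {G H : Type*} [Group G] [Group H] (L : Subgroup (G × H)) : Subgroup G :=
  L.map (MonoidHom.fst G H)

/-- `k₁(L) = {g | (g,1) ∈ L}` for `L ≤ G×H`. -/
def ker1 {G H : Type*} [Group G] [Group H] (L : Subgroup (G × H)) : Subgroup G :=
  L.comap (MonoidHom.inl G H)

/-- `k₁(L)` is a normal subgroup of `p₁(L)`. -/
instance ker1_normal {G H : Type*} [Group G] [Group H] (L : Subgroup (G × H)) :
    ((ker1 L).subgroupOf (proj1 L)).Normal := by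
  constructor
  intro n hn g
  rw [Subgroup.mem_subgroupOf] at hn ⊢
  obtain ⟨x, hxL, hx⟩ := Subgroup.mem_map.mp g.2
  have hn' : ((↑n : G), (1 : H)) ∈ L := hn
  have hmem : x * ((↑n : G), (1 : H)) * x⁻¹ ∈ L :=
    L.mul_mem (L.mul_mem hxL hn') (L.inv_mem hxL)
  have h1 : x.1 = (↑g : G) := hx
  have heq : x * ((↑n : G), (1 : H)) * x⁻¹ = ((↑(g * n * g⁻¹) : G), (1 : H)) := by
    ext
    · simp [h1]
    · simp
  show ((↑(g * n * g⁻¹) : G), (1 : H)) ∈ L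
  rw [← heq]
  exact hmem

/-- `q(L) = p₁(L)/k₁(L)` for `L ≤ G×H`. -/
abbrev qGrp {G H : Type*} [Group G] [Group H] (L : Subgroup (G × H)) :=
  proj1 L ⧸ (ker1 L).subgroupOf (proj1 L)

/-!
Both subquotients come from the group of triples `(k, g, h)` with `(k, g) ∈ U` and
`(g, h) ∈ L`. Sending a triple to the class of `k` maps it onto `q(U*L)`; sending it to the
class of `g` in `q(L)`, or of `k` in `q(U)`, has a smaller kernel, because `(g, 1) ∈ L`
or `(k, 1) ∈ U` already puts `(k, 1)` in `U*L`. And if `ψ : W ↠ Q` and `θ : W →* P` satisfy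
`ker θ ≤ ker ψ`, then `Q` is a quotient of `θ(W) ≅ W / ker θ`, hence a subquotient of `P`.
-/

def IsSubquotient (Q P : Type*) [Group Q] [Group P] : Prop :=
  ∃ (A : Subgroup P) (B : Subgroup A) (_ : B.Normal), Nonempty (Q ≃* A ⧸ B)

theorem IsSubquotient.of_surjective_of_ker_le {W Q P : Type*} [Group W] [Group Q] [Group P]
    (θ : W →* P) (ψ : W →* Q) (hψ : Function.Surjective ψ) (hker : θ.ker ≤ ψ.ker) :
    IsSubquotient Q P := by
  let e : W ⧸ θ.ker ≃* θ.range := QuotientGroup.quotientKerEquivRange θ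
  let M : Subgroup (W ⧸ θ.ker) := ψ.ker.map (QuotientGroup.mk' θ.ker)
  have : M.Normal := ψ.normal_ker.map _ (QuotientGroup.mk'_surjective _)
  have hB : (M.map e.toMonoidHom).Normal := this.map _ e.surjective
  refine ⟨θ.range, M.map e.toMonoidHom, hB, ⟨?_⟩⟩
  exact ((QuotientGroup.quotientKerEquivOfSurjective ψ hψ).symm.trans
    (QuotientGroup.quotientQuotientEquivQuotient θ.ker ψ.ker hker).symm).trans
    (QuotientGroup.congr M _ e rfl)

theorem isSubquotient_qGrp_of_hom {W G H G' H' : Type*} [Group W] [Group G] [Group H]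
    [Group G'] [Group H'] (L : Subgroup (G × H)) (M : Subgroup (G' × H'))
    (f : W →* G) (f' : W →* G') (hf : ∀ w, f w ∈ proj1 L) (hf' : f'.range = proj1 M)
    (hker : ∀ w, f w ∈ ker1 L → f' w ∈ ker1 M) :
    IsSubquotient (qGrp M) (qGrp L) := by
  have hf'M : ∀ w, f' w ∈ proj1 M := fun w => hf' ▸ ⟨w, rfl⟩
  let θ : W →* qGrp L := (QuotientGroup.mk' _).comp (f.codRestrict (proj1 L) hf)
  let ψ : W →* qGrp M := (QuotientGroup.mk' _).comp (f'.codRestrict (proj1 M) hf'M)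
  refine IsSubquotient.of_surjective_of_ker_le θ ψ ?_ ?_
  · rintro ⟨x, hx⟩
    obtain ⟨w, rfl⟩ : x ∈ f'.range := hf' ▸ hx
    exact ⟨w, rfl⟩
  · intro w hw
    simp only [MonoidHom.mem_ker, θ, ψ, MonoidHom.comp_apply, QuotientGroup.mk'_apply,
      QuotientGroup.eq_one_iff, Subgroup.mem_subgroupOf, MonoidHom.codRestrict_apply] at hw ⊢
    exact hker w hw

section Pullback

variable {K G H : Type*} [Group K] [Group G] [Group H]

def starPullback (U : Subgroup (K × G)) (L : Subgroup (G × H)) : Subgroup (K × G × H) :=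
  U.comap ((MonoidHom.fst K (G × H)).prod ((MonoidHom.fst G H).comp (MonoidHom.snd K (G × H))))
    ⊓ L.comap (MonoidHom.snd K (G × H))

theorem mem_starPullback {U : Subgroup (K × G)} {L : Subgroup (G × H)} {x : K × G × H} :
    x ∈ starPullback U L ↔ (x.1, x.2.1) ∈ U ∧ x.2 ∈ L :=
  Iff.rfl

variable (U : Subgroup (K × G)) (L : Subgroup (G × H))

def starPullbackLeft : starPullback U L →* K :=
  (MonoidHom.fst K (G × H)).comp (starPullback U L).subtype

def starPullbackMid : starPullback U L →* G :=
  (MonoidHom.fst G H).comp ((MonoidHom.snd K (G × H)).comp (starPullback U L).subtype)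

theorem range_starPullbackLeft : (starPullbackLeft U L).range = proj1 (starProd U L) := by
  ext k
  constructor
  · rintro ⟨⟨⟨k, g, h⟩, hU, hL⟩, rfl⟩
    exact ⟨(k, h), ⟨g, hU, hL⟩, rfl⟩
  · rintro ⟨⟨k, h⟩, ⟨g, hU, hL⟩, rfl⟩
    exact ⟨⟨(k, g, h), hU, hL⟩, rfl⟩

theorem starPullbackLeft_mem_proj1 (w : starPullback U L) : starPullbackLeft U L w ∈ proj1 U :=
  ⟨_, (mem_starPullback.mp w.2).1, rfl⟩

theorem starPullbackMid_mem_proj1 (w : starPullback U L) : starPullbackMid U L w ∈ proj1 L :=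
  ⟨_, (mem_starPullback.mp w.2).2, rfl⟩

theorem starPullbackLeft_mem_ker1_of_mid (w : starPullback U L)
    (hw : starPullbackMid U L w ∈ ker1 L) : starPullbackLeft U L w ∈ ker1 (starProd U L) :=
  ⟨_, (mem_starPullback.mp w.2).1, hw⟩

theorem starPullbackLeft_mem_ker1_of_left (w : starPullback U L)
    (hw : starPullbackLeft U L w ∈ ker1 U) : starPullbackLeft U L w ∈ ker1 (starProd U L) :=
  ⟨1, hw, L.one_mem⟩

end Pullback

theorem statement11_general (K G H : Type*) [Group K] [Group G] [Group H]
    (U : Subgroup (K × G)) (L : Subgroup (G × H)) :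
    (∃ (A : Subgroup (qGrp L)) (B : Subgroup A) (_ : B.Normal),
        Nonempty (qGrp (starProd U L) ≃* (A ⧸ B))) ∧
    (∃ (A : Subgroup (qGrp U)) (B : Subgroup A) (_ : B.Normal),
        Nonempty (qGrp (starProd U L) ≃* (A ⧸ B))) :=
  ⟨isSubquotient_qGrp_of_hom L (starProd U L) _ _ (starPullbackMid_mem_proj1 U L)
      (range_starPullbackLeft U L) (starPullbackLeft_mem_ker1_of_mid U L),
    isSubquotient_qGrp_of_hom U (starProd U L) _ _ (starPullbackLeft_mem_proj1 U L)
      (range_starPullbackLeft U L) (starPullbackLeft_mem_ker1_of_left U L)⟩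

/-- For subgroups `U ≤ K×G` and `L ≤ G×H` of direct products of finite groups, the
group `q(U*L)` is isomorphic to a subquotient of `q(L)`, and also to a subquotient of
`q(U)`: there exist subgroups `B ⊴ A ≤ q(L)` with `A/B ≅ q(U*L)`, and similarly
for `q(U)`. -/
theorem statement11 (K G H : Type*) [Group K] [Group G] [Group H]
    [Finite K] [Finite G] [Finite H]
    (U : Subgroup (K × G)) (L : Subgroup (G × H)) :
    (∃ (A : Subgroup (qGrp L)) (B : Subgroup A) (_ : B.Normal),
        Nonempty (qGrp (starProd U L) ≃* (A ⧸ B))) ∧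
    (∃ (A : Subgroup (qGrp U)) (B : Subgroup A) (_ : B.Normal),
        Nonempty (qGrp (starProd U L) ≃* (A ⧸ B))) :=
  statement11_general K G H U L
end
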